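/- Let α > 0, β > 0, d > 0, ρ > 0 and set c₁ = 2/α, a = β d^α, b₁ = c₁ π ρ Γ(2/α). Define, for each positive integer K, P(K) = b₁ c₁ ∫₀^∞ (1 − e^{−a x})^K e^{−b₁ x^{−c₁}} x^{−1−c₁} dx. Then liminf_{K→∞} (ln K)^{2/α} · P(K) ≥ π ρ d² β^{2/α} Γ(1 + 2/α) / e. In particular, the secrecy outage probability decays at most like 1/(ln K)^{2/α} as the number of antennas K grows. -/

import Mathlib

/-!
Write `F(x) = exp (-b x^{-c})` for the Fréchet distribution function and `f = F'` for its
density, so that `P(K) = ∫ (1 - e^{-a x})^K f(x) dx`. Beyond `t = log K / a` the factor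
`(1 - e^{-a x})^K` is at least `(1 - 1/K)^K → 1/e`, while the mass of `f` there is
`1 - F(t) ~ b t^{-c} = b a^c (log K)^{-c}`; hence `liminf (log K)^c P(K) ≥ b a^c / e`, and
`b a^c = π ρ d² β^{2/α} Γ(1 + 2/α)`. Since `liminf` in `ℝ` carries a junk value for sequences
unbounded above, a matching upper bound `O((log K)^{-c})` is also needed: split the integral at
`log √K / a`, where the factor is `(1 - 1/√K)^K ≤ e^{-√K}`.
-/

open MeasureTheory Real Filter Topology Set

/-- Extended by `0` on `x ≤ 0`, which makes it continuous at `0`; note that `0 ^ (-c) = 0`. -/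
noncomputable def frechetCDF (b c x : ℝ) : ℝ := if 0 < x then exp (-(b * x ^ (-c))) else 0

noncomputable def frechetPDF (b c x : ℝ) : ℝ := b * c * (exp (-(b * x ^ (-c))) * x ^ (-1 - c))

section Frechet

variable {b c : ℝ}

lemma frechetPDF_nonneg (hb : 0 ≤ b) (hc : 0 ≤ c) {x : ℝ} (hx : 0 < x) :
    0 ≤ frechetPDF b c x := by
  have := rpow_pos_of_pos hx (-1 - c)
  unfold frechetPDF
  positivity

lemma hasDerivAt_frechetCDF (b c : ℝ) {x : ℝ} (hx : 0 < x) :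
    HasDerivAt (frechetCDF b c) (frechetPDF b c x) x := by
  have h : HasDerivAt (fun y => exp (-(b * y ^ (-c)))) (frechetPDF b c x) x := by
    refine (((hasDerivAt_rpow_const (p := -c) (Or.inl hx.ne')).const_mul b).neg).exp.congr_deriv
      ?_
    rw [frechetPDF, show -1 - c = -c - 1 by ring, Pi.neg_apply]
    ring
  refine h.congr_of_eventuallyEq ?_
  filter_upwards [lt_mem_nhds hx] with y hy using if_pos hy

lemma continuousWithinAt_frechetCDF (hb : 0 < b) (hc : 0 < c) {t : ℝ} (ht : 0 ≤ t) :
    ContinuousWithinAt (frechetCDF b c) (Ici t) t := by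
  rcases ht.eq_or_lt with rfl | ht
  · rw [← continuousWithinAt_Ioi_iff_Ici, ContinuousWithinAt, frechetCDF, if_neg (lt_irrefl 0)]
    have h : Tendsto (fun x => exp (-(b * x ^ (-c)))) (𝓝[>] 0) (𝓝 0) :=
      tendsto_exp_atBot.comp
        (tendsto_neg_atTop_atBot.comp
          ((tendsto_rpow_neg_nhdsGT_zero (neg_lt_zero.2 hc)).const_mul_atTop hb))
    exact h.congr' (eventually_nhdsWithin_of_forall fun x hx => (if_pos hx).symm)
  · exact (hasDerivAt_frechetCDF b c ht).continuousAt.continuousWithinAt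

lemma tendsto_frechetCDF_atTop (b : ℝ) (hc : 0 < c) : Tendsto (frechetCDF b c) atTop (𝓝 1) := by
  have h : Tendsto (fun x => exp (-(b * x ^ (-c)))) atTop (𝓝 1) := by
    simpa using ((tendsto_rpow_neg_atTop hc).const_mul b).neg.rexp
  exact h.congr' (by filter_upwards [eventually_gt_atTop 0] with x hx using (if_pos hx).symm)

lemma integrableOn_frechetPDF (hb : 0 < b) (hc : 0 < c) {t : ℝ} (ht : 0 ≤ t) :
    IntegrableOn (frechetPDF b c) (Ioi t) :=
  integrableOn_Ioi_deriv_of_nonneg (continuousWithinAt_frechetCDF hb hc ht)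
    (fun _ hx => hasDerivAt_frechetCDF b c (ht.trans_lt hx))
    (fun _ hx => frechetPDF_nonneg hb.le hc.le (ht.trans_lt hx)) (tendsto_frechetCDF_atTop b hc)

lemma integral_Ioi_frechetPDF (hb : 0 < b) (hc : 0 < c) {t : ℝ} (ht : 0 ≤ t) :
    ∫ x in Ioi t, frechetPDF b c x = 1 - frechetCDF b c t :=
  integral_Ioi_of_hasDerivAt_of_nonneg (continuousWithinAt_frechetCDF hb hc ht)
    (fun _ hx => hasDerivAt_frechetCDF b c (ht.trans_lt hx))
    (fun _ hx => frechetPDF_nonneg hb.le hc.le (ht.trans_lt hx)) (tendsto_frechetCDF_atTop b hc)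

lemma one_sub_frechetCDF_le {t : ℝ} (ht : 0 < t) : 1 - frechetCDF b c t ≤ b * t ^ (-c) := by
  rw [frechetCDF, if_pos ht]
  linarith [add_one_le_exp (-(b * t ^ (-c)))]

end Frechet

section SetIntegral

variable {α : Type*} [MeasurableSpace α] {μ : Measure α} {f g : α → ℝ} {s t : Set α}

lemma mul_setIntegral_le_setIntegral_mul {m : ℝ} (hts : t ⊆ s) (hs : MeasurableSet s)
    (ht : MeasurableSet t) (hf : IntegrableOn f t μ) (hgf : IntegrableOn (fun x => g x * f x) s μ)
    (hgf_nonneg : ∀ x ∈ s, 0 ≤ g x * f x) (hm : ∀ x ∈ t, m * f x ≤ g x * f x) :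
    m * ∫ x in t, f x ∂μ ≤ ∫ x in s, g x * f x ∂μ :=
  calc m * ∫ x in t, f x ∂μ = ∫ x in t, m * f x ∂μ := (integral_const_mul m _).symm
    _ ≤ ∫ x in t, g x * f x ∂μ := setIntegral_mono_on (hf.const_mul m) (hgf.mono_set hts) ht hm
    _ ≤ ∫ x in s, g x * f x ∂μ :=
      setIntegral_mono_set hgf ((ae_restrict_iff' hs).2 (.of_forall hgf_nonneg)) hts.eventuallyLE

lemma setIntegral_mul_le {M : ℝ} (hM : 0 ≤ M) (hts : t ⊆ s) (hs : MeasurableSet s)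
    (ht : MeasurableSet t) (hf : IntegrableOn f s μ) (hgf : IntegrableOn (fun x => g x * f x) s μ)
    (hf_nonneg : ∀ x ∈ s, 0 ≤ f x) (hg_le_one : ∀ x ∈ t, g x ≤ 1) (hg_le : ∀ x ∈ s \ t, g x ≤ M) :
    ∫ x in s, g x * f x ∂μ ≤ M * ∫ x in s, f x ∂μ + ∫ x in t, f x ∂μ := by
  rw [← integral_inter_add_sdiff ht hgf, inter_eq_right.2 hts, add_comm]
  gcongr ?_ + ?_
  · calc ∫ x in s \ t, g x * f x ∂μ ≤ ∫ x in s \ t, M * f x ∂μ :=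
          setIntegral_mono_on (hgf.mono_set sdiff_subset) ((hf.mono_set sdiff_subset).const_mul M)
            (hs.diff ht) fun x hx => mul_le_mul_of_nonneg_right (hg_le x hx) (hf_nonneg x hx.1)
      _ = M * ∫ x in s \ t, f x ∂μ := integral_const_mul M _
      _ ≤ M * ∫ x in s, f x ∂μ := mul_le_mul_of_nonneg_left (setIntegral_mono_set hf
          ((ae_restrict_iff' hs).2 (.of_forall hf_nonneg)) sdiff_subset.eventuallyLE) hM
  · exact setIntegral_mono_on (hgf.mono_set hts) (hf.mono_set hts) ht fun x hx =>
      mul_le_of_le_one_left (hf_nonneg x (hts hx)) (hg_le_one x hx)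

end SetIntegral

lemma tendsto_rpow_mul_one_sub_exp_neg_mul_rpow_neg (B : ℝ) {c : ℝ} (hc : 0 < c) :
    Tendsto (fun u => u ^ c * (1 - exp (-(B * u ^ (-c))))) atTop (𝓝 B) := by
  have hderiv : HasDerivAt (fun s => 1 - exp (-(B * s))) B 0 :=
    (((hasDerivAt_id 0).const_mul B).neg.exp.const_sub 1).congr_deriv (by simp)
  have hs : Tendsto (fun u : ℝ => u ^ (-c)) atTop (𝓝[≠] 0) :=
    tendsto_nhdsWithin_iff.2 ⟨tendsto_rpow_neg_atTop hc,
      by filter_upwards [eventually_gt_atTop 0] with u hu using (rpow_pos_of_pos hu _).ne'⟩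
  refine ((hasDerivAt_iff_tendsto_slope.1 hderiv).comp hs).congr' ?_
  filter_upwards [eventually_gt_atTop 0] with u hu
  simp [slope_def_field, rpow_neg hu.le, div_inv_eq_mul, mul_comm]

lemma tendsto_log_rpow_mul_exp_neg_sqrt {c : ℝ} (hc : 0 ≤ c) :
    Tendsto (fun x => log x ^ c * exp (-√x)) atTop (𝓝 0) := by
  have h : Tendsto (fun x => x ^ c * exp (-√x)) atTop (𝓝 0) := by
    refine ((tendsto_rpow_mul_exp_neg_mul_atTop_nhds_zero (2 * c) 1 one_pos).comp
      tendsto_sqrt_atTop).congr' ?_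
    filter_upwards [eventually_ge_atTop 0] with x hx
    simp [sqrt_eq_rpow, ← rpow_mul hx]
  refine tendsto_of_tendsto_of_tendsto_of_le_of_le' tendsto_const_nhds h ?_ ?_
  · filter_upwards [eventually_ge_atTop 1] with x hx
    exact mul_nonneg (rpow_nonneg (log_nonneg hx) c) (exp_pos _).le
  · filter_upwards [eventually_ge_atTop 1] with x hx
    exact mul_le_mul_of_nonneg_right
      (rpow_le_rpow (log_nonneg hx) (log_le_self (by linarith)) hc) (exp_pos _).le

noncomputable def outageIntegral (a b c : ℝ) (K : ℕ) : ℝ :=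
  ∫ x in Ioi 0, (1 - exp (-(a * x))) ^ K * frechetPDF b c x

section Outage

variable {a b c : ℝ}

lemma one_sub_exp_neg_mul_mem_Icc (ha : 0 ≤ a) {x : ℝ} (hx : 0 ≤ x) :
    1 - exp (-(a * x)) ∈ Icc 0 1 :=
  ⟨sub_nonneg.2 (exp_le_one_iff.2 (neg_nonpos.2 (mul_nonneg ha hx))),
    sub_le_self _ (exp_pos _).le⟩

lemma integrableOn_pow_one_sub_exp_mul_frechetPDF (ha : 0 ≤ a) (hb : 0 < b) (hc : 0 < c)
    (K : ℕ) :
    IntegrableOn (fun x => (1 - exp (-(a * x))) ^ K * frechetPDF b c x) (Ioi 0) := by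
  refine (integrableOn_frechetPDF hb hc le_rfl).bdd_mul (c := 1) (by fun_prop) ?_
  refine (ae_restrict_iff' measurableSet_Ioi).2 (.of_forall fun x hx => ?_)
  obtain ⟨h0, h1⟩ := one_sub_exp_neg_mul_mem_Icc ha (le_of_lt hx)
  rw [norm_pow, Real.norm_of_nonneg h0]
  exact pow_le_one₀ h0 h1

lemma le_outageIntegral (ha : 0 < a) (hb : 0 < b) (hc : 0 < c) {K : ℕ} (hK : 1 < K) :
    (1 - (K : ℝ)⁻¹) ^ K * (1 - exp (-(b * a ^ c * log K ^ (-c)))) ≤ outageIntegral a b c K := by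
  have hK0 : (0 : ℝ) < K := by positivity
  have hlog : 0 < log K := log_pos (by exact_mod_cast hK)
  have ht : 0 < log K / a := div_pos hlog ha
  have htail :
      1 - exp (-(b * a ^ c * log K ^ (-c))) = ∫ x in Ioi (log K / a), frechetPDF b c x := by
    rw [integral_Ioi_frechetPDF hb hc ht.le, frechetCDF, if_pos ht, div_rpow hlog.le ha.le,
      rpow_neg ha.le, div_inv_eq_mul, mul_comm (log K ^ (-c)), mul_assoc]
  rw [htail]
  refine mul_setIntegral_le_setIntegral_mul (Ioi_subset_Ioi ht.le) measurableSet_Ioi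
    measurableSet_Ioi (integrableOn_frechetPDF hb hc ht.le)
    (integrableOn_pow_one_sub_exp_mul_frechetPDF ha.le hb hc K) (fun x hx => ?_) (fun x hx => ?_)
  · exact mul_nonneg (pow_nonneg (one_sub_exp_neg_mul_mem_Icc ha.le (le_of_lt hx)).1 K)
      (frechetPDF_nonneg hb.le hc.le hx)
  · have hx0 : 0 < x := ht.trans hx
    have hexp : exp (-(a * x)) ≤ (K : ℝ)⁻¹ := by
      rw [← exp_log hK0, ← exp_neg]
      exact exp_le_exp.2 (neg_le_neg ((div_lt_iff₀' ha).1 hx).le)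
    refine mul_le_mul_of_nonneg_right (pow_le_pow_left₀ ?_ (by linarith) K)
      (frechetPDF_nonneg hb.le hc.le hx0)
    exact sub_nonneg.2 (inv_le_one_of_one_le₀ (by exact_mod_cast hK.le))

lemma outageIntegral_le (ha : 0 ≤ a) (hb : 0 < b) (hc : 0 < c) (K : ℕ) {t : ℝ} (ht : 0 < t) :
    outageIntegral a b c K ≤ (1 - exp (-(a * t))) ^ K + b * t ^ (-c) := by
  have hM := one_sub_exp_neg_mul_mem_Icc ha ht.le
  have h := setIntegral_mul_le (pow_nonneg hM.1 K) (Ioi_subset_Ioi ht.le) measurableSet_Ioi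
    measurableSet_Ioi (integrableOn_frechetPDF hb hc le_rfl)
    (integrableOn_pow_one_sub_exp_mul_frechetPDF ha hb hc K)
    (fun x hx => frechetPDF_nonneg hb.le hc.le hx)
    (fun x hx => pow_le_one₀ (one_sub_exp_neg_mul_mem_Icc ha (ht.trans hx).le).1
      (one_sub_exp_neg_mul_mem_Icc ha (ht.trans hx).le).2)
    (fun x hx => pow_le_pow_left₀ (one_sub_exp_neg_mul_mem_Icc ha (le_of_lt hx.1)).1
      (sub_le_sub_left (exp_le_exp.2 (neg_le_neg (mul_le_mul_of_nonneg_left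
        (not_lt.1 hx.2) ha))) 1) K)
  rw [integral_Ioi_frechetPDF hb hc le_rfl, integral_Ioi_frechetPDF hb hc ht.le,
    frechetCDF, if_neg (lt_irrefl 0), sub_zero, mul_one] at h
  exact h.trans (add_le_add le_rfl (one_sub_frechetCDF_le ht))

lemma isBoundedUnder_log_rpow_mul_outageIntegral (ha : 0 < a) (hb : 0 < b) (hc : 0 < c) :
    IsBoundedUnder (· ≤ ·) atTop (fun K : ℕ => log K ^ c * outageIntegral a b c K) := by
  have hmajorant : Tendsto (fun K : ℕ => log K ^ c * exp (-√K) + b * (2 * a) ^ c) atTop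
      (𝓝 (0 + b * (2 * a) ^ c)) :=
    ((tendsto_log_rpow_mul_exp_neg_sqrt hc.le).comp tendsto_natCast_atTop_atTop).add_const _
  refine hmajorant.isBoundedUnder_le.mono_le ?_
  filter_upwards [eventually_gt_atTop 1] with K hK
  have hK0 : (0 : ℝ) < K := by positivity
  have hlog : 0 < log K := log_pos (by exact_mod_cast hK)
  have ht : 0 < log √K / a := by rw [log_sqrt hK0.le]; positivity
  have hexp : exp (-(a * (log √K / a))) = √K / K := by
    rw [mul_div_cancel₀ _ ha.ne', exp_neg, exp_log (sqrt_pos.2 hK0), sqrt_div_self]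
  have hrate : log K ^ c * (log √K / a) ^ (-c) = (2 * a) ^ c := by
    rw [log_sqrt hK0.le, rpow_neg (by positivity), ← div_eq_mul_inv,
      ← div_rpow hlog.le (by positivity)]
    congr 1
    field_simp
  calc log K ^ c * outageIntegral a b c K
      ≤ log K ^ c * ((1 - exp (-(a * (log √K / a)))) ^ K + b * (log √K / a) ^ (-c)) :=
        mul_le_mul_of_nonneg_left (outageIntegral_le ha.le hb hc K ht) (rpow_nonneg hlog.le c)
    _ = log K ^ c * (1 - √K / K) ^ K + b * (2 * a) ^ c := by rw [hexp, ← hrate]; ring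
    _ ≤ log K ^ c * exp (-√K) + b * (2 * a) ^ c := by
        gcongr
        exact one_sub_div_pow_le_exp_neg (sqrt_le_self_iff.2 (.inr (by exact_mod_cast hK.le)))

theorem le_liminf_log_rpow_mul_outageIntegral (ha : 0 < a) (hb : 0 < b) (hc : 0 < c) :
    b * a ^ c / exp 1 ≤ liminf (fun K : ℕ => log K ^ c * outageIntegral a b c K) atTop := by
  have hlower : Tendsto (fun K : ℕ => (1 - (K : ℝ)⁻¹) ^ K *
      (log K ^ c * (1 - exp (-(b * a ^ c * log K ^ (-c)))))) atTop
      (𝓝 (exp (-1) * (b * a ^ c))) := by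
    refine Tendsto.mul ?_ ((tendsto_rpow_mul_one_sub_exp_neg_mul_rpow_neg _ hc).comp
      (tendsto_log_atTop.comp tendsto_natCast_atTop_atTop))
    simpa [sub_eq_add_neg, neg_div] using tendsto_one_add_div_pow_exp (-1)
  rw [div_eq_inv_mul, ← exp_neg, ← hlower.liminf_eq]
  refine liminf_le_liminf ?_ hlower.isBoundedUnder_ge
    (isBoundedUnder_log_rpow_mul_outageIntegral ha hb hc).isCoboundedUnder_ge
  filter_upwards [eventually_gt_atTop 1] with K hK
  calc _ = log K ^ c * ((1 - (K : ℝ)⁻¹) ^ K * (1 - exp (-(b * a ^ c * log K ^ (-c))))) := by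
        ring
    _ ≤ log K ^ c * outageIntegral a b c K :=
        mul_le_mul_of_nonneg_left (le_outageIntegral ha hb hc hK)
          (rpow_nonneg (log_nonneg (by exact_mod_cast hK.le)) c)

end Outage

/-- The half-duplex secrecy outage probability decays at most like
`1/(ln K)^{2/α}`: `liminf_{K→∞} (ln K)^{2/α} P(K) ≥ π ρ d² β^{2/α} Γ(1+2/α) / e`. -/
theorem hd_secrecy_outage_liminf
    (α β d ρ : ℝ) (hα : 0 < α) (hβ : 0 < β) (hd : 0 < d) (hρ : 0 < ρ)
    (c₁ a b₁ : ℝ)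
    (hc₁ : c₁ = 2 / α) (ha : a = β * d ^ α)
    (hb₁ : b₁ = c₁ * Real.pi * ρ * Real.Gamma (2 / α))
    (P : ℕ → ℝ)
    (hP : ∀ K : ℕ, P K =
      b₁ * c₁ * ∫ x in Set.Ioi (0:ℝ),
        (1 - exp (-(a * x))) ^ K * exp (-(b₁ * x ^ (-c₁))) * x ^ (-1 - c₁)) :
    Real.pi * ρ * d ^ 2 * β ^ (2 / α) * Real.Gamma (1 + 2 / α) / Real.exp 1 ≤
      Filter.liminf (fun K : ℕ => (Real.log K) ^ (2 / α) * P K) atTop := by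
  subst hc₁ ha hb₁
  have hc : 0 < 2 / α := by positivity
  have hΓ : 0 < Gamma (2 / α) := Gamma_pos_of_pos hc
  have hP' : P = outageIntegral (β * d ^ α) (2 / α * π * ρ * Gamma (2 / α)) (2 / α) := by
    ext K
    rw [hP, outageIntegral, ← integral_const_mul]
    refine setIntegral_congr_fun measurableSet_Ioi fun x _ => ?_
    rw [frechetPDF]
    ring
  have hconst : π * ρ * d ^ 2 * β ^ (2 / α) * Gamma (1 + 2 / α) =
      2 / α * π * ρ * Gamma (2 / α) * (β * d ^ α) ^ (2 / α) := by
    rw [mul_rpow hβ.le (rpow_nonneg hd.le α), ← rpow_mul hd.le, mul_div_cancel₀ _ hα.ne',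
      add_comm, Gamma_add_one hc.ne', rpow_two]
    ring
  rw [hconst, hP']
  exact le_liminf_log_rpow_mul_outageIntegral (by positivity) (by positivity) hc
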